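/- Let b > 0, ρ ∈ (−1,1), α ∈ ℝ with α + b√(1−ρ²) > 0, N(l) = α + b(ρl + √(l²+1)), σ > 0, μ ∈ ℝ, and set w(k) = σN(k/σ − μ). Define f₁(k) = k/√(w(k)) − √(w(k))/2 and f₂(k) = k/√(w(k)) + √(w(k))/2. Then for every l ∈ ℝ, with k = σ(l+μ): f₁'(k)·√(σN(l)) = 1 − N'(l)((l+μ)/(2N(l)) + 1/4) and f₂'(k)·√(σN(l)) = 1 − N'(l)((l+μ)/(2N(l)) − 1/4). In particular, the Fukasawa conditions f₁' > 0 and f₂' > 0 hold everywhere if and only if both factors G₁₊(l) = 1 − N'(l)((l+μ)/(2N(l)) + 1/4) and G₁₋(l) = 1 − N'(l)((l+μ)/(2N(l)) − 1/4) are positive for all l. -/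

import Mathlib

/-!
Writing `s = √w`, the quotient and chain rules give
`(k/s ∓ s/2)' · s = 1 - k s'/s ∓ s s'/2 = 1 - w'·(k/(2w) ± 1/4)`.
For the rescaled SVI smile, `w'(σ(l+μ)) = N'(l)` and `k/(2w) = (l+μ)/(2N(l))` at
`k = σ(l+μ)`, which yields the two factors. Since `w > 0` and `l ↦ σ(l+μ)` is onto, the
derivatives and the factors have the same signs everywhere.
-/

open Real

/-- Cauchy–Schwarz for `(-ρ, √(1-ρ²))` and `(l, 1)`. -/
theorem sqrt_one_sub_sq_le_mul_add_sqrt_sq_add_one {ρ : ℝ} (hρ : ρ ^ 2 ≤ 1) (l : ℝ) :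
    √(1 - ρ ^ 2) ≤ ρ * l + √(l ^ 2 + 1) := by
  have ht : √(1 - ρ ^ 2) ^ 2 = 1 - ρ ^ 2 := sq_sqrt (by linarith)
  have hsq : (√(1 - ρ ^ 2) - ρ * l) ^ 2 ≤ l ^ 2 + 1 := by
    nlinarith [sq_nonneg (√(1 - ρ ^ 2) * l + ρ)]
  linarith [le_sqrt_of_sq_le hsq]

theorem svi_pos {α b ρ : ℝ} (hb : 0 ≤ b) (hρ : ρ ^ 2 ≤ 1) (hα : 0 < α + b * √(1 - ρ ^ 2))
    (l : ℝ) : 0 < α + b * (ρ * l + √(l ^ 2 + 1)) := by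
  have := mul_le_mul_of_nonneg_left (sqrt_one_sub_sq_le_mul_add_sqrt_sq_add_one hρ l) hb
  linarith

theorem hasDerivAt_sqrt_sq_add_one (x : ℝ) :
    HasDerivAt (fun y : ℝ => √(y ^ 2 + 1)) (x / √(x ^ 2 + 1)) x := by
  have h := ((hasDerivAt_pow 2 x).add_const 1).sqrt (by positivity)
  convert h using 1
  norm_num
  exact (mul_div_mul_left _ _ two_ne_zero).symm

theorem hasDerivAt_svi (α b ρ x : ℝ) :
    HasDerivAt (fun l : ℝ => α + b * (ρ * l + √(l ^ 2 + 1))) (b * (ρ + x / √(x ^ 2 + 1))) x := by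
  simpa using ((((hasDerivAt_id x).const_mul ρ).add
    (hasDerivAt_sqrt_sq_add_one x)).const_mul b).const_add α

theorem HasDerivAt.mul_comp_div_sub {N : ℝ → ℝ} {n σ μ x : ℝ} (hN : HasDerivAt N n (x / σ - μ))
    (hσ : σ ≠ 0) : HasDerivAt (fun y => σ * N (y / σ - μ)) n x := by
  refine ((hN.comp x (((hasDerivAt_id x).div_const σ).sub_const μ)).const_mul σ).congr_deriv ?_
  field_simp

/-- With `ε = -1` and `ε = 1` these are the derivatives of `-d₁` and `-d₂` at total
variance `w`. -/
theorem HasDerivAt.div_sqrt_add_mul_sqrt {w : ℝ → ℝ} {w' x : ℝ} (ε : ℝ) (hw : HasDerivAt w w' x)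
    (hx : 0 < w x) :
    HasDerivAt (fun y => y / √(w y) + ε * √(w y) / 2)
      ((1 - w' * (x / (2 * w x) - ε / 4)) / √(w x)) x := by
  have hs := hw.sqrt hx.ne'
  have hs0 : √(w x) ≠ 0 := (sqrt_pos.2 hx).ne'
  have hs2 : √(w x) ^ 2 = w x := sq_sqrt hx.le
  refine (((hasDerivAt_id' x).div hs hs0).add ((hs.const_mul ε).div_const 2)).congr_deriv ?_
  field_simp
  rw [hs2]
  ring

theorem deriv_rescaled_mul_sqrt {N : ℝ → ℝ} {n σ μ l : ℝ} (ε : ℝ) (hN : HasDerivAt N n l)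
    (hNl : 0 < N l) (hσ : 0 < σ) :
    deriv (fun y => y / √(σ * N (y / σ - μ)) + ε * √(σ * N (y / σ - μ)) / 2) (σ * (l + μ)) *
        √(σ * N l) = 1 - n * ((l + μ) / (2 * N l) - ε / 4) := by
  have hl : σ * (l + μ) / σ - μ = l := by field_simp; ring
  have hw : HasDerivAt (fun y => σ * N (y / σ - μ)) n (σ * (l + μ)) := by
    rw [← hl] at hN
    exact hN.mul_comp_div_sub hσ.ne'
  have hratio : σ * (l + μ) / (2 * (σ * N l)) = (l + μ) / (2 * N l) := by
    rw [mul_left_comm, mul_div_mul_left _ _ hσ.ne']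
  have hwl : 0 < σ * N (σ * (l + μ) / σ - μ) := by rw [hl]; positivity
  rw [(hw.div_sqrt_add_mul_sqrt ε hwl).deriv, hl, hratio,
    div_mul_cancel₀ _ (sqrt_pos.2 (by positivity)).ne']

theorem forall_pos_iff_of_mul_eq {a c g : ℝ → ℝ} {σ μ : ℝ} (hσ : σ ≠ 0) (hc : ∀ l, 0 < c l)
    (h : ∀ l, a (σ * (l + μ)) * c l = g l) : (∀ k, 0 < a k) ↔ ∀ l, 0 < g l := by
  refine ⟨fun ha l => h l ▸ mul_pos (ha _) (hc l), fun hg k => ?_⟩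
  obtain ⟨l, rfl⟩ : ∃ l, σ * (l + μ) = k := ⟨k / σ - μ, by field_simp; ring⟩
  exact pos_of_mul_pos_left ((h l).symm ▸ hg l) (hc l).le

/-- for the SVI smile `w(k) = σN(k/σ − μ)` and
`f₁(k) = k/√w − √w/2`, `f₂(k) = k/√w + √w/2`, one has
`f₁'(k)·√(σN(l)) = G₁₊(l)` and `f₂'(k)·√(σN(l)) = G₁₋(l)` at `k = σ(l+μ)`;
in particular the Fukasawa conditions `f₁' > 0`, `f₂' > 0` hold everywhere iff
`G₁₊` and `G₁₋` are positive everywhere. -/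
theorem fukasawa_factors_identity
    (b ρ α σ μ : ℝ) (hb : 0 < b) (hρ₁ : -1 < ρ) (hρ₂ : ρ < 1)
    (hα : 0 < α + b * Real.sqrt (1 - ρ ^ 2)) (hσ : 0 < σ)
    (N N' w f₁ f₂ G₁p G₁m : ℝ → ℝ)
    (hN : ∀ l, N l = α + b * (ρ * l + Real.sqrt (l ^ 2 + 1)))
    (hN' : ∀ l, N' l = b * (ρ + l / Real.sqrt (l ^ 2 + 1)))
    (hw : ∀ k, w k = σ * N (k / σ - μ))
    (hf₁ : ∀ k, f₁ k = k / Real.sqrt (w k) - Real.sqrt (w k) / 2)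
    (hf₂ : ∀ k, f₂ k = k / Real.sqrt (w k) + Real.sqrt (w k) / 2)
    (hG₁p : ∀ l, G₁p l = 1 - N' l * ((l + μ) / (2 * N l) + 1 / 4))
    (hG₁m : ∀ l, G₁m l = 1 - N' l * ((l + μ) / (2 * N l) - 1 / 4)) :
    (∀ l : ℝ,
      deriv f₁ (σ * (l + μ)) * Real.sqrt (σ * N l) = G₁p l ∧
      deriv f₂ (σ * (l + μ)) * Real.sqrt (σ * N l) = G₁m l) ∧
    ((∀ k : ℝ, 0 < deriv f₁ k ∧ 0 < deriv f₂ k) ↔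
      (∀ l : ℝ, 0 < G₁p l ∧ 0 < G₁m l)) := by
  have hNpos : ∀ l, 0 < N l := fun l => hN l ▸ svi_pos hb.le (by nlinarith) hα l
  have hN_deriv : ∀ l, HasDerivAt N (N' l) l := fun l => by
    rw [funext hN, hN']
    exact hasDerivAt_svi α b ρ l
  have hf₁_eq : f₁ = fun y => y / √(σ * N (y / σ - μ)) + -1 * √(σ * N (y / σ - μ)) / 2 := by
    funext y
    rw [hf₁, hw]
    ring
  have hf₂_eq : f₂ = fun y => y / √(σ * N (y / σ - μ)) + 1 * √(σ * N (y / σ - μ)) / 2 := by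
    funext y
    rw [hf₂, hw]
    ring
  have identity : ∀ l,
      deriv f₁ (σ * (l + μ)) * √(σ * N l) = G₁p l ∧
      deriv f₂ (σ * (l + μ)) * √(σ * N l) = G₁m l := fun l => by
    rw [hG₁p, hG₁m, hf₁_eq, hf₂_eq, deriv_rescaled_mul_sqrt _ (hN_deriv l) (hNpos l) hσ,
      deriv_rescaled_mul_sqrt _ (hN_deriv l) (hNpos l) hσ]
    norm_num
  have hsqrt_pos : ∀ l, 0 < √(σ * N l) := fun l => sqrt_pos.2 (mul_pos hσ (hNpos l))
  refine ⟨identity, ?_⟩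
  rw [forall_and, forall_and,
    forall_pos_iff_of_mul_eq hσ.ne' hsqrt_pos fun l => (identity l).1,
    forall_pos_iff_of_mul_eq hσ.ne' hsqrt_pos fun l => (identity l).2]
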